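/- Let Λ ⊂ V be a full-rank lattice in a euclidean space of dimension m, let f_σ(v) = (2πσ²)^{−m/2} exp(−|v|²/(2σ²)) and F_σ(v) = Σ_{λ ∈ Λ} f_σ(v + λ). Define δ_σ(v) by F_σ(v) = f_σ(v)(1 + δ_σ(v)). Then for every compact set K contained in the interior of the Voronoi cell 𝒱_Λ = {v : |v| ≤ |v − λ| for all λ ∈ Λ}, there exist constants σ₀, c, a > 0 such that |δ_σ(v)| ≤ c·e^{−a/σ²} for all 0 < σ < σ₀ and all v ∈ K. -/

import Mathlib

open scoped Real
open scoped RealInnerProductSpace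

namespace Stmt17

/-- The Gaussian density `f_σ(v) = (2πσ²)^{−m/2} e^{−|v|²/(2σ²)}` on `ℝ^m`. -/
noncomputable def gaussDensity (m : ℕ) (σ : ℝ) (v : EuclideanSpace ℝ (Fin m)) : ℝ :=
  (2 * π * σ ^ 2) ^ (-(m : ℝ) / 2) * Real.exp (-‖v‖ ^ 2 / (2 * σ ^ 2))

/-- The periodization `F_σ(v) = Σ_{λ∈Λ} f_σ(v+λ)`. -/
noncomputable def periodization (m : ℕ) (Λ : AddSubgroup (EuclideanSpace ℝ (Fin m)))
    (σ : ℝ) (v : EuclideanSpace ℝ (Fin m)) : ℝ :=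
  ∑' l : Λ, gaussDensity m σ (v + (l : EuclideanSpace ℝ (Fin m)))

/-- The Voronoi cell of `Λ` at the origin. -/
def voronoi (m : ℕ) (Λ : AddSubgroup (EuclideanSpace ℝ (Fin m))) :
    Set (EuclideanSpace ℝ (Fin m)) :=
  {v | ∀ l ∈ Λ, ‖v‖ ≤ ‖v - l‖}


lemma aux_int {c : ℝ} (hc : 0 < c) :
    Summable fun z : ℤ => Real.exp (-(c * |(z : ℝ)|)) := by
  have hgeo : Summable fun n : ℕ => Real.exp (-(c * n)) := by
    have := Real.summable_exp_nat_mul_iff.mpr (neg_neg_of_pos hc)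
    refine this.congr fun n => ?_
    ring_nf
  refine Summable.of_nat_of_neg_add_one (hgeo.congr fun n => ?_) ?_
  · push_cast
    rw [abs_of_nonneg (by positivity : (0:ℝ) ≤ (n:ℝ))]
  · refine (hgeo.mul_right (Real.exp (-c))).congr fun n => ?_
    rw [← Real.exp_add]
    push_cast
    rw [abs_of_nonpos (by push_cast; linarith [Nat.cast_nonneg (α := ℝ) n] : (-((n:ℝ)+1)) ≤ 0)]
    ring_nf

lemma aux_pi : ∀ (k : ℕ) {c : ℝ}, 0 < c →
    Summable fun n : Fin k → ℤ => Real.exp (-(c * ∑ j, |((n j : ℤ) : ℝ)|))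
  | 0, c, hc => by
    have : Finite (Fin 0 → ℤ) := Finite.of_subsingleton
    exact Summable.of_finite
  | (k+1), c, hc => by
    have h1 := aux_int hc
    have h2 := aux_pi k hc
    have h3 : Summable fun p : ℤ × (Fin k → ℤ) =>
        Real.exp (-(c * |(p.1 : ℝ)|)) * Real.exp (-(c * ∑ j, |((p.2 j : ℤ) : ℝ)|)) :=
      h1.mul_of_nonneg h2 (fun _ => (Real.exp_pos _).le) (fun _ => (Real.exp_pos _).le)
    have h4 := (Fin.consEquiv fun _ : Fin (k+1) => ℤ).symm.summable_iff.mpr h3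
    refine h4.congr fun n => ?_
    simp only [Function.comp_apply, Fin.consEquiv, Equiv.coe_fn_symm_mk]
    rw [← Real.exp_add, Fin.sum_univ_succ]
    simp only [Fin.tail]
    ring

/-- The `ℤ`-submodule underlying an additive subgroup. -/
def subOf {m : ℕ} (Λ : AddSubgroup (EuclideanSpace ℝ (Fin m))) :
    Submodule ℤ (EuclideanSpace ℝ (Fin m)) :=
  { carrier := (Λ : Set (EuclideanSpace ℝ (Fin m)))
    add_mem' := fun ha hb => Λ.add_mem ha hb
    zero_mem' := Λ.zero_mem
    smul_mem' := fun n _ hx => Λ.zsmul_mem hx n }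

lemma aux_sub {m : ℕ} (L : Submodule ℤ (EuclideanSpace ℝ (Fin m)))
    [DiscreteTopology L] [IsZLattice ℝ L] {t : ℝ} (ht : 0 < t) :
    Summable fun x : L => Real.exp (-(t * ‖(x : EuclideanSpace ℝ (Fin m))‖)) := by
  classical
  haveI : Module.Finite ℤ L := ZLattice.module_finite ℝ L
  haveI : Module.Free ℤ L := ZLattice.module_free ℝ L
  let b := Module.Free.chooseBasis ℤ L
  set ι := Module.Free.ChooseBasisIndex ℤ L with hι
  let B := b.ofZLatticeBasis ℝ L
  set C := ‖(B.equivFunL.toContinuousLinearMap :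
      EuclideanSpace ℝ (Fin m) →L[ℝ] (ι → ℝ))‖ + 1 with hC
  have hC0 : (0:ℝ) < C := by positivity
  have hcoord : ∀ (x : L) (i : ι),
      |((b.repr x i : ℤ) : ℝ)| ≤ C * ‖(x : EuclideanSpace ℝ (Fin m))‖ := by
    intro x i
    have h1 : ((b.repr x i : ℤ) : ℝ) = B.repr (x : EuclideanSpace ℝ (Fin m)) i :=
      (b.ofZLatticeBasis_repr_apply ℝ L x i).symm
    rw [h1]
    have h2 : |B.repr (x : EuclideanSpace ℝ (Fin m)) i| ≤
        ‖B.equivFun (x : EuclideanSpace ℝ (Fin m))‖ := by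
      have := norm_le_pi_norm (B.equivFun (x : EuclideanSpace ℝ (Fin m))) i
      simpa [Module.Basis.equivFun_apply, Real.norm_eq_abs] using this
    refine h2.trans ?_
    have h3 : ‖B.equivFunL.toContinuousLinearMap (x : EuclideanSpace ℝ (Fin m))‖ ≤
        ‖(B.equivFunL.toContinuousLinearMap :
          EuclideanSpace ℝ (Fin m) →L[ℝ] (ι → ℝ))‖ * ‖(x : EuclideanSpace ℝ (Fin m))‖ :=
      ContinuousLinearMap.le_opNorm _ _
    have h4 : B.equivFunL.toContinuousLinearMap (x : EuclideanSpace ℝ (Fin m)) =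
        B.equivFun (x : EuclideanSpace ℝ (Fin m)) := rfl
    rw [h4] at h3
    refine h3.trans ?_
    have : (0:ℝ) ≤ ‖(x : EuclideanSpace ℝ (Fin m))‖ := norm_nonneg _
    nlinarith
  set D := (Fintype.card ι : ℝ) * C + 1 with hD
  have hD0 : (0:ℝ) < D := by positivity
  have hsumcoord : ∀ x : L,
      ∑ i, |((b.repr x i : ℤ) : ℝ)| ≤ D * ‖(x : EuclideanSpace ℝ (Fin m))‖ := by
    intro x
    calc ∑ i, |((b.repr x i : ℤ) : ℝ)|
        ≤ ∑ _i : ι, C * ‖(x : EuclideanSpace ℝ (Fin m))‖ :=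
          Finset.sum_le_sum fun i _ => hcoord x i
      _ = (Fintype.card ι : ℝ) * (C * ‖(x : EuclideanSpace ℝ (Fin m))‖) := by
          rw [Finset.sum_const, nsmul_eq_mul, Finset.card_univ]
      _ ≤ D * ‖(x : EuclideanSpace ℝ (Fin m))‖ := by
          have : (0:ℝ) ≤ ‖(x : EuclideanSpace ℝ (Fin m))‖ := norm_nonneg _
          nlinarith [Nat.cast_nonneg (α := ℝ) (Fintype.card ι)]
  have key : ∀ x : L, Real.exp (-(t * ‖(x : EuclideanSpace ℝ (Fin m))‖)) ≤
      Real.exp (-((t / D) * ∑ i, |((b.repr x i : ℤ) : ℝ)|)) := by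
    intro x
    apply Real.exp_le_exp.2
    rw [neg_le_neg_iff, div_mul_eq_mul_div, div_le_iff₀ hD0]
    have := hsumcoord x
    nlinarith
  refine Summable.of_nonneg_of_le (fun _ => (Real.exp_pos _).le) key ?_
  have htD : 0 < t / D := div_pos ht hD0
  have hG := aux_pi (Fintype.card ι) htD
  have hF : Summable fun n : ι → ℤ =>
      Real.exp (-((t / D) * ∑ i, |((n i : ℤ) : ℝ)|)) := by
    have h5 := (Equiv.arrowCongr (Fintype.equivFin ι) (Equiv.refl ℤ)).summable_iff.mpr hG
    refine h5.congr fun n => ?_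
    simp only [Function.comp_apply, Equiv.arrowCongr_apply, Equiv.coe_refl, id_eq]
    congr 2
    exact congrArg (fun s => t / D * s)
      (Equiv.sum_comp (Fintype.equivFin ι).symm fun i => |((n i : ℤ) : ℝ)|)
  have h6 := (b.equivFun.toEquiv).summable_iff.mpr hF
  refine h6.congr fun x => ?_
  simp only [Function.comp_apply, LinearEquiv.coe_toEquiv, Module.Basis.equivFun_apply]

lemma aux_lat {m : ℕ} (Λ : AddSubgroup (EuclideanSpace ℝ (Fin m))) [DiscreteTopology Λ]
    (hspan : Submodule.span ℝ (Λ : Set (EuclideanSpace ℝ (Fin m))) = ⊤)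
    {t : ℝ} (ht : 0 < t) :
    Summable fun l : Λ => Real.exp (-(t * ‖(l : EuclideanSpace ℝ (Fin m))‖)) := by
  haveI : DiscreteTopology (subOf Λ) := ‹DiscreteTopology Λ›
  haveI : IsZLattice ℝ (subOf Λ) := ⟨hspan⟩
  exact (Equiv.summable_iff
    ⟨fun x : Λ => (⟨x.1, x.2⟩ : subOf Λ), fun x => ⟨x.1, x.2⟩,
      fun x => rfl, fun x => rfl⟩).mpr (aux_sub (subOf Λ) ht)

/-- writing `F_σ = f_σ(1 + δ_σ)`, the relative error `δ_σ` is
exponentially small, uniformly on compact subsets of the interior of the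
Voronoi cell: `|δ_σ(v)| ≤ c e^{−a/σ²}` for `0 < σ < σ₀`, `v ∈ K`. -/
theorem stmt17 {m : ℕ} (Λ : AddSubgroup (EuclideanSpace ℝ (Fin m)))
    [DiscreteTopology Λ]
    (hspan : Submodule.span ℝ (Λ : Set (EuclideanSpace ℝ (Fin m))) = ⊤)
    (K : Set (EuclideanSpace ℝ (Fin m))) (hK : IsCompact K)
    (hKint : K ⊆ interior (voronoi m Λ)) :
    ∃ σ₀ > (0 : ℝ), ∃ c > (0 : ℝ), ∃ a > (0 : ℝ),
      ∀ σ : ℝ, 0 < σ → σ < σ₀ → ∀ v ∈ K,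
        |periodization m Λ σ v / gaussDensity m σ v - 1| ≤
          c * Real.exp (-a / σ ^ 2) := by
  classical
  obtain ⟨δ, hδ0, hδ⟩ := hK.exists_thickening_subset_open isOpen_interior hKint
  -- geometric estimate on the Voronoi cell
  have hgeom : ∀ v ∈ K, ∀ l : Λ,
      δ * ‖(l : EuclideanSpace ℝ (Fin m))‖ ≤
        ‖v + (l : EuclideanSpace ℝ (Fin m))‖ ^ 2 - ‖v‖ ^ 2 := by
    intro v hv l
    rcases eq_or_ne (l : EuclideanSpace ℝ (Fin m)) 0 with h0 | h0
    · simp [h0]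
    · have hln : 0 < ‖(l : EuclideanSpace ℝ (Fin m))‖ := norm_pos_iff.2 h0
      set lv : EuclideanSpace ℝ (Fin m) := (l : EuclideanSpace ℝ (Fin m)) with hlv
      set s : ℝ := δ / (2 * ‖lv‖) with hs
      have hs0 : 0 < s := by positivity
      have hx : v - s • lv ∈ voronoi m Λ := by
        refine interior_subset (hδ ?_)
        refine Metric.mem_thickening_iff.2 ⟨v, hv, ?_⟩
        have : dist (v - s • lv) v = ‖s • lv‖ := by
          rw [dist_eq_norm, sub_sub_cancel_left, norm_neg]
        rw [this, norm_smul, Real.norm_eq_abs, abs_of_pos hs0, hs]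
        rw [div_mul_eq_mul_div, div_lt_iff₀ (by positivity)]
        nlinarith
      have h2 := hx (-lv) (neg_mem l.2)
      rw [sub_neg_eq_add] at h2
      have h2' : ‖v - s • lv‖ ^ 2 ≤ ‖v - s • lv + lv‖ ^ 2 :=
        pow_le_pow_left₀ (norm_nonneg _) h2 2
      have e1 : ‖v + lv‖ ^ 2 = ‖v‖ ^ 2 + 2 * ⟪v, lv⟫ + ‖lv‖ ^ 2 := norm_add_sq_real v lv
      have e2 : ‖v - s • lv + lv‖ ^ 2 =
          ‖v - s • lv‖ ^ 2 + 2 * ⟪v - s • lv, lv⟫ + ‖lv‖ ^ 2 := norm_add_sq_real _ lv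
      have e3 : ⟪v - s • lv, lv⟫ = ⟪v, lv⟫ - s * ‖lv‖ ^ 2 := by
        rw [inner_sub_left, real_inner_smul_left, real_inner_self_eq_norm_sq]
      have hsl : s * ‖lv‖ ^ 2 = (δ / 2) * ‖lv‖ := by
        rw [hs]
        field_simp
      nlinarith
    -- minimal norm of nonzero lattice points
  obtain ⟨ε, hε0, hε⟩ := Metric.isOpen_singleton_iff.1 (isOpen_discrete ({0} : Set Λ))
  have hmin : ∀ l : Λ, l ≠ 0 → ε ≤ ‖(l : EuclideanSpace ℝ (Fin m))‖ := by
    intro l h0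
    by_contra hcon
    push_neg at hcon
    refine h0 (hε l ?_)
    rw [Subtype.dist_eq, ZeroMemClass.coe_zero, dist_zero_right]
    exact hcon
  -- constants
  set c1 : ℝ := δ / 2 with hc1def
  have hc1 : 0 < c1 := by positivity
  have hmaster := aux_lat Λ hspan hc1
  set S : ℝ := ∑' l : Λ, Real.exp (-(c1 * ‖(l : EuclideanSpace ℝ (Fin m))‖)) with hSdef
  have hS0 : 0 ≤ S := tsum_nonneg fun _ => (Real.exp_pos _).le
  refine ⟨1, one_pos, Real.exp (c1 * ε) * S + 1,
    by positivity, c1 * ε, by positivity, ?_⟩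
  intro σ hσ0 hσ1 v hv
  have hσ2 : (0:ℝ) < σ ^ 2 := by positivity
  have hf0 : 0 < gaussDensity m σ v :=
    mul_pos (Real.rpow_pos_of_pos (by positivity) _) (Real.exp_pos _)
  set g : Λ → ℝ := fun l =>
    Real.exp (-((‖v + (l : EuclideanSpace ℝ (Fin m))‖ ^ 2 - ‖v‖ ^ 2) / (2 * σ ^ 2))) with hgdef
  have hfg : ∀ l : Λ, gaussDensity m σ (v + (l : EuclideanSpace ℝ (Fin m))) =
      gaussDensity m σ v * g l := by
    intro l
    simp only [gaussDensity, hgdef, mul_assoc, ← Real.exp_add]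
    congr 2
    field_simp
    ring
  have hquot : periodization m Λ σ v / gaussDensity m σ v = ∑' l : Λ, g l := by
    rw [periodization]
    simp_rw [hfg]
    rw [tsum_mul_left, mul_div_cancel_left₀ _ (ne_of_gt hf0)]
  -- termwise bounds
  have hgle : ∀ l : Λ, g l ≤ Real.exp (-(c1 / σ ^ 2 * ‖(l : EuclideanSpace ℝ (Fin m))‖)) := by
    intro l
    apply Real.exp_le_exp.2
    rw [neg_le_neg_iff]
    have h := hgeom v hv l
    rw [div_mul_eq_mul_div, div_le_div_iff₀ hσ2 (by positivity : (0:ℝ) < 2 * σ ^ 2)]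
    simp only [hc1def]
    nlinarith [mul_le_mul_of_nonneg_right h hσ2.le]
  have hc1σ : ∀ l : Λ, Real.exp (-(c1 / σ ^ 2 * ‖(l : EuclideanSpace ℝ (Fin m))‖)) ≤
      Real.exp (-(c1 * ‖(l : EuclideanSpace ℝ (Fin m))‖)) := by
    intro l
    apply Real.exp_le_exp.2
    rw [neg_le_neg_iff]
    have hn : (0:ℝ) ≤ ‖(l : EuclideanSpace ℝ (Fin m))‖ := norm_nonneg _
    have : c1 ≤ c1 / σ ^ 2 := by
      rw [le_div_iff₀ hσ2]
      nlinarith [mul_nonneg (sub_nonneg.2 hσ1.le) (by linarith : (0:ℝ) ≤ 1 + σ), hc1]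
    nlinarith
  have hsg : Summable g :=
    Summable.of_nonneg_of_le (fun l => (Real.exp_pos _).le)
      (fun l => (hgle l).trans (hc1σ l)) hmaster
  have hg0 : g (0 : Λ) = 1 := by
    simp [hgdef]
  have hsplit : ∑' l : Λ, g l = 1 + ∑' l : Λ, if l = 0 then 0 else g l := by
    rw [hsg.tsum_eq_add_tsum_ite (0 : Λ), hg0]
  -- the remainder sum and its bound
  have hterm : ∀ l : Λ, (if l = 0 then 0 else g l) ≤
      Real.exp (c1 * ε) * Real.exp (-(c1 * ‖(l : EuclideanSpace ℝ (Fin m))‖)) *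
        Real.exp (-(c1 * ε) / σ ^ 2) := by
    intro l
    split_ifs with h
    · positivity
    · refine (hgle l).trans ?_
      rw [← Real.exp_add, ← Real.exp_add]
      apply Real.exp_le_exp.2
      have hl : ε ≤ ‖(l : EuclideanSpace ℝ (Fin m))‖ := hmin l h
      have hu : 1 ≤ 1 / σ ^ 2 := by
        rw [le_div_iff₀ hσ2]
        nlinarith
      have hkey : 0 ≤ c1 * (‖(l : EuclideanSpace ℝ (Fin m))‖ - ε) * (1 / σ ^ 2 - 1) :=
        mul_nonneg (mul_nonneg hc1.le (sub_nonneg.2 hl)) (sub_nonneg.2 hu)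
      have h1 : c1 / σ ^ 2 * ‖(l : EuclideanSpace ℝ (Fin m))‖ =
          c1 * ‖(l : EuclideanSpace ℝ (Fin m))‖ * (1 / σ ^ 2) := by ring
      have h2 : -(c1 * ε) / σ ^ 2 = -(c1 * ε * (1 / σ ^ 2)) := by ring
      rw [h1, h2]
      nlinarith
  have hboundsum : Summable fun l : Λ =>
      Real.exp (c1 * ε) * Real.exp (-(c1 * ‖(l : EuclideanSpace ℝ (Fin m))‖)) *
        Real.exp (-(c1 * ε) / σ ^ 2) :=
    (hmaster.mul_left _).mul_right _
  have hitesum : Summable fun l : Λ => if l = 0 then 0 else g l :=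
    Summable.of_nonneg_of_le
      (fun l => by split_ifs; exacts [le_rfl, (Real.exp_pos _).le])
      (fun l => by split_ifs with h; exacts [(Real.exp_pos _).le, le_rfl]) hsg
  rw [hquot, hsplit]
  have hT0 : 0 ≤ ∑' l : Λ, if l = 0 then 0 else g l :=
    tsum_nonneg fun l => by split_ifs; exacts [le_rfl, (Real.exp_pos _).le]
  rw [add_sub_cancel_left, abs_of_nonneg hT0]
  have hle1 : (∑' l : Λ, if l = 0 then 0 else g l) ≤
      ∑' l : Λ, Real.exp (c1 * ε) * Real.exp (-(c1 * ‖(l : EuclideanSpace ℝ (Fin m))‖)) *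
        Real.exp (-(c1 * ε) / σ ^ 2) := Summable.tsum_le_tsum hterm hitesum hboundsum
  have heq : (∑' l : Λ, Real.exp (c1 * ε) *
      Real.exp (-(c1 * ‖(l : EuclideanSpace ℝ (Fin m))‖)) *
      Real.exp (-(c1 * ε) / σ ^ 2)) =
      (Real.exp (c1 * ε) * Real.exp (-(c1 * ε) / σ ^ 2)) * S := by
    rw [hSdef, ← tsum_mul_left]
    exact tsum_congr fun l => by ring
  refine hle1.trans ?_
  rw [heq]
  nlinarith [Real.exp_pos (c1 * ε), hS0, Real.exp_pos (-(c1 * ε) / σ ^ 2),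
    mul_nonneg (Real.exp_pos (c1 * ε)).le hS0]

end Stmt17
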